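/- arXiv:math-ph/0511039 — 14 statements merged into one kernel-verified Lean document; each statement's English description precedes it below -/
import Mathlib

section
/- Let G be a ternary semigroup, X a real Banach space, and φ : G × G × G → [0,∞) a function such that for all x, y, z ∈ G the series φ̃(x,y,z) := (1/3)·∑_{n=0}^∞ 3^{-n} φ(x^{3^n}, y^{3^n}, z^{3^n}) converges. Suppose f : G → X satisfies ‖f([xyz]) − f(x) − f(y) − f(z)‖ ≤ φ(x,y,z) for all x, y, z ∈ G. Then there exists a mapping T : G → X such that T(x³) = 3·T(x) and ‖f(x) − T(x)‖ ≤ φ̃(x,x,x) for all x ∈ G. -/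
/-- Iterated cube: `cubeIter op x n = x^{3^n}` where `x³ = op x x x`. -/
def cubeIter {G : Type*} (op : G → G → G → G) (x : G) : ℕ → G
  | 0 => x
  | n + 1 => op (cubeIter op x n) (cubeIter op x n) (cubeIter op x n)

lemma cubeIter_eq_iterate {G : Type*} (op : G → G → G → G) (x : G) (n : ℕ) :
    cubeIter op x n = (fun y => op y y y)^[n] x := by
  induction n with
  | zero => rfl
  | succ n ih => rw [Function.iterate_succ_apply', ← ih]; rfl

section HyersSequence

variable {𝕜 G X : Type*} [NormedField 𝕜] [NormedAddCommGroup X] [NormedSpace 𝕜 X]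
  {c : G → G} {k : 𝕜} {f : G → X} {δ : G → ℝ}

/-- Consecutive terms of the Hyers sequence `k⁻ⁿ • f (cⁿ x)` differ by
`k⁻ⁿ⁻¹ • (f (c y) - k • f y)` with `y = cⁿ x`. -/
lemma dist_inv_pow_smul_iterate_le (hk : k ≠ 0) (hf : ∀ x, ‖f (c x) - k • f x‖ ≤ δ x)
    (x : G) (n : ℕ) :
    dist (k⁻¹ ^ n • f (c^[n] x)) (k⁻¹ ^ (n + 1) • f (c^[n + 1] x)) ≤
      ‖k‖⁻¹ * (‖k‖⁻¹ ^ n * δ (c^[n] x)) := by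
  have hdiff : k⁻¹ ^ n • f (c^[n] x) - k⁻¹ ^ (n + 1) • f (c^[n + 1] x) =
      -(k⁻¹ ^ (n + 1) • (f (c (c^[n] x)) - k • f (c^[n] x))) := by
    rw [Function.iterate_succ_apply', smul_sub, smul_smul, pow_succ, mul_assoc,
      inv_mul_cancel₀ hk, mul_one]
    abel
  rw [dist_eq_norm, hdiff, norm_neg, norm_smul, norm_pow, norm_inv, pow_succ, mul_comm _ ‖k‖⁻¹,
    mul_assoc]
  gcongr
  exact hf _

theorem exists_map_eq_smul_of_norm_sub_smul_le [CompleteSpace X] (hk : k ≠ 0)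
    (hf : ∀ x, ‖f (c x) - k • f x‖ ≤ δ x)
    (hδ : ∀ x, Summable fun n : ℕ => ‖k‖⁻¹ ^ n * δ (c^[n] x)) :
    ∃ T : G → X, (∀ x, T (c x) = k • T x) ∧
      ∀ x, ‖f x - T x‖ ≤ ‖k‖⁻¹ * ∑' n : ℕ, ‖k‖⁻¹ ^ n * δ (c^[n] x) := by
  set g : G → ℕ → X := fun x n => k⁻¹ ^ n • f (c^[n] x)
  have hdist := dist_inv_pow_smul_iterate_le hk hf
  have hsum : ∀ x, Summable fun n : ℕ => ‖k‖⁻¹ * (‖k‖⁻¹ ^ n * δ (c^[n] x)) :=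
    fun x => (hδ x).mul_left _
  have hlim : ∀ x, ∃ a, Filter.Tendsto (g x) Filter.atTop (nhds a) := fun x =>
    cauchySeq_tendsto_of_complete (cauchySeq_of_dist_le_of_summable _ (hdist x) (hsum x))
  choose T hT using hlim
  refine ⟨T, fun x => ?_, fun x => ?_⟩
  · have hshift : ∀ n, g (c x) n = k • g x (n + 1) := fun n => by
      simp only [g, Function.iterate_succ_apply, smul_smul, pow_succ', ← mul_assoc,
        mul_inv_cancel₀ hk, one_mul]
    have hlim' : Filter.Tendsto (g (c x)) Filter.atTop (nhds (k • T x)) :=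
      (((hT x).comp (Filter.tendsto_add_atTop_nat 1)).const_smul k).congr fun n => (hshift n).symm
    exact tendsto_nhds_unique (hT (c x)) hlim'
  · have h := dist_le_tsum_of_dist_le_of_tendsto₀ _ (hdist x) (hsum x) (hT x)
    rwa [pow_zero, one_smul, Function.iterate_zero_apply, dist_eq_norm, tsum_mul_left] at h

end HyersSequence

theorem stmt_0_general {G : Type*} (op : G → G → G → G)
    {X : Type*} [NormedAddCommGroup X] [NormedSpace ℝ X] [CompleteSpace X]
    (φ : G → G → G → ℝ)
    (hconv : ∀ x y z : G, Summable (fun n : ℕ =>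
      ((1 : ℝ) / 3) ^ n * φ (cubeIter op x n) (cubeIter op y n) (cubeIter op z n)))
    (f : G → X)
    (hf : ∀ x y z : G, ‖f (op x y z) - f x - f y - f z‖ ≤ φ x y z) :
    ∃ T : G → X, (∀ x : G, T (op x x x) = (3 : ℝ) • T x) ∧
      ∀ x : G, ‖f x - T x‖ ≤
        (1 / 3) * ∑' n : ℕ,
          ((1 : ℝ) / 3) ^ n * φ (cubeIter op x n) (cubeIter op x n) (cubeIter op x n) := by
  have hnorm : ‖(3 : ℝ)‖⁻¹ = 1 / 3 := by norm_num
  have hcube : ∀ x, ‖f (op x x x) - (3 : ℝ) • f x‖ ≤ φ x x x := fun x => by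
    rw [show (3 : ℝ) • f x = f x + f x + f x by module, ← sub_sub, ← sub_sub]
    exact hf x x x
  obtain ⟨T, hT, hfT⟩ := exists_map_eq_smul_of_norm_sub_smul_le (c := fun y => op y y y)
    (δ := fun y => φ y y y) three_ne_zero hcube
    (fun x => by simpa only [hnorm, cubeIter_eq_iterate] using hconv x x x)
  refine ⟨T, hT, fun x => ?_⟩
  simpa only [hnorm, cubeIter_eq_iterate] using hfT x

theorem stmt_0 {G : Type*} (op : G → G → G → G)
    (assoc : ∀ x y z u v : G,
      op (op x y z) u v = op x (op y z u) v ∧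
      op x (op y z u) v = op x y (op z u v))
    {X : Type*} [NormedAddCommGroup X] [NormedSpace ℝ X] [CompleteSpace X]
    (φ : G → G → G → ℝ) (hφ : ∀ x y z, 0 ≤ φ x y z)
    (hconv : ∀ x y z : G, Summable (fun n : ℕ =>
      ((1 : ℝ) / 3) ^ n * φ (cubeIter op x n) (cubeIter op y n) (cubeIter op z n)))
    (f : G → X)
    (hf : ∀ x y z : G, ‖f (op x y z) - f x - f y - f z‖ ≤ φ x y z) :
    ∃ T : G → X, (∀ x : G, T (op x x x) = (3 : ℝ) • T x) ∧
      ∀ x : G, ‖f x - T x‖ ≤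
        (1 / 3) * ∑' n : ℕ,
          ((1 : ℝ) / 3) ^ n * φ (cubeIter op x n) (cubeIter op x n) (cubeIter op x n) :=
  stmt_0_general op φ hconv f hf
end

section
/- Let G be a ternary semigroup, X a real Banach space, and φ : G × G × G → [0,∞) a function such that for all x, y, z ∈ G the series φ̃(x,y,z) := (1/3)·∑_{n=0}^∞ 3^{-n} φ(x^{3^n}, y^{3^n}, z^{3^n}) converges, and suppose f : G → X satisfies ‖f([xyz]) − f(x) − f(y) − f(z)‖ ≤ φ(x,y,z) for all x, y, z ∈ G. If T, T' : G → X both satisfy T(x³) = 3·T(x), T'(x³) = 3·T'(x), ‖f(x) − T(x)‖ ≤ φ̃(x,x,x) and ‖f(x) − T'(x)‖ ≤ φ̃(x,x,x) for all x ∈ G, then T = T'. -/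
lemma cubeIter_add {G : Type*} (op : G → G → G → G) (x : G) (n k : ℕ) :
    cubeIter op (cubeIter op x n) k = cubeIter op x (k + n) := by
  induction k with
  | zero => simp [cubeIter]
  | succ k ih => rw [Nat.add_right_comm]; simp [cubeIter, ih]

theorem stmt_1 {G : Type*} (op : G → G → G → G)
    (assoc : ∀ x y z u v : G,
      op (op x y z) u v = op x (op y z u) v ∧
      op x (op y z u) v = op x y (op z u v))
    {X : Type*} [NormedAddCommGroup X] [NormedSpace ℝ X] [CompleteSpace X]
    (φ : G → G → G → ℝ) (hφ : ∀ x y z, 0 ≤ φ x y z)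
    (hconv : ∀ x y z : G, Summable (fun n : ℕ =>
      ((1 : ℝ) / 3) ^ n * φ (cubeIter op x n) (cubeIter op y n) (cubeIter op z n)))
    (f : G → X)
    (hf : ∀ x y z : G, ‖f (op x y z) - f x - f y - f z‖ ≤ φ x y z)
    (T T' : G → X)
    (hT3 : ∀ x : G, T (op x x x) = (3 : ℝ) • T x)
    (hT'3 : ∀ x : G, T' (op x x x) = (3 : ℝ) • T' x)
    (hTb : ∀ x : G, ‖f x - T x‖ ≤
      (1 / 3) * ∑' n : ℕ,
        ((1 : ℝ) / 3) ^ n * φ (cubeIter op x n) (cubeIter op x n) (cubeIter op x n))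
    (hT'b : ∀ x : G, ‖f x - T' x‖ ≤
      (1 / 3) * ∑' n : ℕ,
        ((1 : ℝ) / 3) ^ n * φ (cubeIter op x n) (cubeIter op x n) (cubeIter op x n)) :
    T = T' := by
  funext x
  set a : ℕ → ℝ := fun m => ((1 : ℝ) / 3) ^ m * φ (cubeIter op x m) (cubeIter op x m)
    (cubeIter op x m) with ha
  have hTpow : ∀ (S : G → X), (∀ y, S (op y y y) = (3 : ℝ) • S y) →
      ∀ n, S (cubeIter op x n) = (3 : ℝ) ^ n • S x := by
    intro S hS n
    induction n with
    | zero => simp [cubeIter]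
    | succ n ih => rw [cubeIter, hS, ih, smul_smul, pow_succ, mul_comm]
  have key : ∀ n : ℕ, ‖T x - T' x‖ ≤ (2 / 3) * ∑' k : ℕ, a (k + n) := by
    intro n
    set y := cubeIter op x n with hy
    have hyk : ∀ k, cubeIter op y k = cubeIter op x (k + n) := fun k => cubeIter_add op x n k
    have h3pos : (0 : ℝ) < (3 : ℝ) ^ n := by positivity
    -- the tsum at y equals 3^n times the shifted tsum at x
    have heq : (∑' k : ℕ, ((1 : ℝ) / 3) ^ k * φ (cubeIter op y k) (cubeIter op y k)
        (cubeIter op y k)) = (3 : ℝ) ^ n * ∑' k : ℕ, a (k + n) := by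
      rw [← tsum_mul_left]
      apply tsum_congr
      intro k
      simp only [ha, hyk k]
      rw [pow_add]
      field_simp
      ring_nf
      rw [mul_assoc, ← mul_pow]
      norm_num
    have hnorm : ‖T y - T' y‖ = (3 : ℝ) ^ n * ‖T x - T' x‖ := by
      rw [hy, hTpow T hT3 n, hTpow T' hT'3 n, ← smul_sub, norm_smul]
      simp [abs_of_pos h3pos]
    have hb : ‖T y - T' y‖ ≤ (3 : ℝ) ^ n * ((2 / 3) * ∑' k : ℕ, a (k + n)) := by
      have h1 := hTb y
      have h2 := hT'b y
      have hsplit : T y - T' y = -(f y - T y) + (f y - T' y) := by abel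
      calc ‖T y - T' y‖ ≤ ‖f y - T y‖ + ‖f y - T' y‖ := by
            rw [hsplit]
            exact (norm_add_le _ _).trans (by rw [norm_neg])
        _ ≤ (1/3) * ((3 : ℝ) ^ n * ∑' k : ℕ, a (k + n)) +
            (1/3) * ((3 : ℝ) ^ n * ∑' k : ℕ, a (k + n)) := by
            rw [← heq]; exact add_le_add h1 h2
        _ = (3 : ℝ) ^ n * ((2 / 3) * ∑' k : ℕ, a (k + n)) := by ring
    rw [hnorm] at hb
    exact le_of_mul_le_mul_left hb h3pos
  have htail : Filter.Tendsto (fun n : ℕ => (2 / 3) * ∑' k : ℕ, a (k + n))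
      Filter.atTop (nhds 0) := by
    have := tendsto_sum_nat_add a
    simpa using this.const_mul (2 / 3 : ℝ)
  have : ‖T x - T' x‖ ≤ 0 :=
    ge_of_tendsto' htail key
  have : T x - T' x = 0 := by
    have := le_antisymm this (norm_nonneg _)
    simpa using this
  exact sub_eq_zero.mp this
end

section
/- Let G be a commutative ternary semigroup, X a real Banach space, and φ : G × G × G → [0,∞) a function such that for all x, y, z ∈ G the series φ̃(x,y,z) := (1/3)·∑_{n=0}^∞ 3^{-n} φ(x^{3^n}, y^{3^n}, z^{3^n}) converges and moreover 3^{-n} φ(x^{3^n}, y^{3^n}, z^{3^n}) → 0 as n → ∞. Suppose f : G → X satisfies ‖f([xyz]) − f(x) − f(y) − f(z)‖ ≤ φ(x,y,z) for all x, y, z ∈ G. Then the map T : G → X defined by T(x) = lim_{n→∞} 3^{-n} f(x^{3^n}) satisfies T([xyz]) = T(x) + T(y) + T(z) for all x, y, z ∈ G. -/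
/-!
In a commutative ternary semigroup cubing is multiplicative, so `(xyz)^{3^n} = x^{3^n} y^{3^n} z^{3^n}`.
Applying the hypothesis on `f` at these cubes and scaling by `3^{-n}`, the sequences defining
`T (xyz)` and `T x + T y + T z` differ by at most `3^{-n} φ(x^{3^n}, y^{3^n}, z^{3^n}) → 0`.
-/

open Filter Topology

def TernaryAssociative {G : Type*} (op : G → G → G → G) : Prop :=
  ∀ x y z u v : G, op (op x y z) u v = op x (op y z u) v ∧ op x (op y z u) v = op x y (op z u v)

def TernaryCommutative {G : Type*} (op : G → G → G → G) : Prop :=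
  ∀ x y z : G, op x y z = op x z y ∧ op x y z = op y x z ∧ op x y z = op y z x ∧
    op x y z = op z x y ∧ op x y z = op z y x

section TernarySemigroup

variable {G : Type*} {op : G → G → G → G}

theorem TernaryAssociative.op_left_eq_op_right (assoc : TernaryAssociative op) (a b c u v : G) :
    op (op a b c) u v = op a b (op c u v) :=
  (assoc a b c u v).1.trans (assoc a b c u v).2

theorem op_cube (assoc : TernaryAssociative op) (comm : TernaryCommutative op) (x y z : G) :
    op (op x y z) (op x y z) (op x y z) = op (op x x x) (op y y y) (op z z z) := by
  have A := assoc.op_left_eq_op_right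
  have swap_xy : ∀ w : G, op x y (op x y w) = op x x (op y y w) := fun w => by
    rw [← A, (comm x y x).1, A]
  have absorb_yy : ∀ w : G, op y y (op x y w) = op x (op y y y) w := fun w => by
    rw [← A, (comm y y x).2.2.2.1, (assoc x y y y w).1]
  calc op (op x y z) (op x y z) (op x y z)
      = op x y (op z (op x y z) (op x y z)) := A x y z _ _
    _ = op x y (op x y (op z z (op x y z))) := by rw [(comm z (op x y z) _).2.1, A]
    _ = op x y (op x y (op x y (op z z z))) := by rw [(comm z z (op x y z)).2.2.2.1, A]
    _ = op x x (op x (op y y y) (op z z z)) := by rw [swap_xy, absorb_yy]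
    _ = op (op x x x) (op y y y) (op z z z) := by rw [← A]

theorem cubeIter_op (assoc : TernaryAssociative op) (comm : TernaryCommutative op) (x y z : G) :
    ∀ n, cubeIter op (op x y z) n = op (cubeIter op x n) (cubeIter op y n) (cubeIter op z n)
  | 0 => rfl
  | n + 1 => by
    simp only [cubeIter, cubeIter_op assoc comm x y z n]
    exact op_cube assoc comm _ _ _

end TernarySemigroup

theorem eq_of_tendsto_of_norm_sub_le {ι X : Type*} [NormedAddCommGroup X] {l : Filter ι} [l.NeBot]
    {a b : ι → X} {A B : X} {ε : ι → ℝ} (ha : Tendsto a l (𝓝 A)) (hb : Tendsto b l (𝓝 B))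
    (hε : Tendsto ε l (𝓝 0)) (hab : ∀ i, ‖a i - b i‖ ≤ ε i) : A = B :=
  sub_eq_zero.mp <| tendsto_nhds_unique (ha.sub hb) (squeeze_zero_norm hab hε)

theorem stmt_2_general {G : Type*} (op : G → G → G → G)
    (assoc : ∀ x y z u v : G,
      op (op x y z) u v = op x (op y z u) v ∧
      op x (op y z u) v = op x y (op z u v))
    (comm : ∀ x y z : G,
      op x y z = op x z y ∧ op x y z = op y x z ∧ op x y z = op y z x ∧
      op x y z = op z x y ∧ op x y z = op z y x)
    {X : Type*} [NormedAddCommGroup X] [NormedSpace ℝ X]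
    (φ : G → G → G → ℝ)
    (hlim : ∀ x y z : G, Tendsto (fun n : ℕ =>
      ((1 : ℝ) / 3) ^ n * φ (cubeIter op x n) (cubeIter op y n) (cubeIter op z n))
      atTop (𝓝 0))
    (f : G → X)
    (hf : ∀ x y z : G, ‖f (op x y z) - f x - f y - f z‖ ≤ φ x y z)
    (T : G → X)
    (hT : ∀ x : G, Tendsto (fun n : ℕ => ((1 : ℝ) / 3) ^ n • f (cubeIter op x n))
      atTop (𝓝 (T x))) :
    ∀ x y z : G, T (op x y z) = T x + T y + T z := by
  intro x y z
  refine eq_of_tendsto_of_norm_sub_le (hT (op x y z)) (((hT x).add (hT y)).add (hT z))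
    (hlim x y z) fun n => ?_
  rw [cubeIter_op assoc comm, ← smul_add, ← smul_add, ← smul_sub, norm_smul,
    Real.norm_of_nonneg (by positivity), ← sub_sub, ← sub_sub]
  exact mul_le_mul_of_nonneg_left (hf _ _ _) (by positivity)

theorem stmt_2 {G : Type*} (op : G → G → G → G)
    (assoc : ∀ x y z u v : G,
      op (op x y z) u v = op x (op y z u) v ∧
      op x (op y z u) v = op x y (op z u v))
    (comm : ∀ x y z : G,
      op x y z = op x z y ∧ op x y z = op y x z ∧ op x y z = op y z x ∧
      op x y z = op z x y ∧ op x y z = op z y x)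
    {X : Type*} [NormedAddCommGroup X] [NormedSpace ℝ X] [CompleteSpace X]
    (φ : G → G → G → ℝ) (hφ : ∀ x y z, 0 ≤ φ x y z)
    (hconv : ∀ x y z : G, Summable (fun n : ℕ =>
      ((1 : ℝ) / 3) ^ n * φ (cubeIter op x n) (cubeIter op y n) (cubeIter op z n)))
    (hlim : ∀ x y z : G, Tendsto (fun n : ℕ =>
      ((1 : ℝ) / 3) ^ n * φ (cubeIter op x n) (cubeIter op y n) (cubeIter op z n))
      atTop (𝓝 0))
    (f : G → X)
    (hf : ∀ x y z : G, ‖f (op x y z) - f x - f y - f z‖ ≤ φ x y z)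
    (T : G → X)
    (hT : ∀ x : G, Tendsto (fun n : ℕ => ((1 : ℝ) / 3) ^ n • f (cubeIter op x n))
      atTop (𝓝 (T x))) :
    ∀ x y z : G, T (op x y z) = T x + T y + T z :=
  stmt_2_general op assoc comm φ hlim f hf T hT
end

section
/- Let G be a ternary semigroup, X a real normed space, and φ : G × G × G → [0,∞). Suppose f : G → X satisfies ‖f([xyz]) − f(x) − f(y) − f(z)‖ ≤ φ(x,y,z) for all x, y, z ∈ G. Then for every x ∈ G and every positive integer n, ‖3^{-n} f(x^{3^n}) − f(x)‖ ≤ (1/3)·∑_{k=0}^{n-1} 3^{-k} φ(x^{3^k}, x^{3^k}, x^{3^k}). -/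
theorem norm_one_div_pow_smul_sub_le_sum {X : Type*} [NormedAddCommGroup X] [NormedSpace ℝ X]
    {c : ℝ} (hc : 0 < c) (a : ℕ → X) (b : ℕ → ℝ)
    (hab : ∀ k, ‖a (k + 1) - c • a k‖ ≤ b k) (n : ℕ) :
    ‖(1 / c) ^ n • a n - a 0‖ ≤ 1 / c * ∑ k ∈ Finset.range n, (1 / c) ^ k * b k := by
  induction n with
  | zero => simp
  | succ n ih =>
    have step : (1 / c) ^ (n + 1) • a (n + 1) - (1 / c) ^ n • a n
        = (1 / c) ^ (n + 1) • (a (n + 1) - c • a n) := by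
      rw [smul_sub, smul_smul, pow_succ, mul_assoc, one_div_mul_cancel hc.ne', mul_one]
    have step_le : ‖(1 / c) ^ (n + 1) • a (n + 1) - (1 / c) ^ n • a n‖
        ≤ (1 / c) ^ (n + 1) * b n := by
      rw [step, norm_smul, Real.norm_of_nonneg (by positivity)]
      gcongr
      exact hab n
    calc ‖(1 / c) ^ (n + 1) • a (n + 1) - a 0‖
        ≤ ‖(1 / c) ^ (n + 1) • a (n + 1) - (1 / c) ^ n • a n‖ + ‖(1 / c) ^ n • a n - a 0‖ :=
          norm_sub_le_norm_sub_add_norm_sub _ _ _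
      _ ≤ (1 / c) ^ (n + 1) * b n + 1 / c * ∑ k ∈ Finset.range n, (1 / c) ^ k * b k :=
          add_le_add step_le ih
      _ = 1 / c * ∑ k ∈ Finset.range (n + 1), (1 / c) ^ k * b k := by
          rw [Finset.sum_range_succ]; ring

theorem norm_map_cube_sub_three_smul_le {G X : Type*} [NormedAddCommGroup X] [NormedSpace ℝ X]
    (op : G → G → G → G) (φ : G → G → G → ℝ) (f : G → X)
    (hf : ∀ x y z : G, ‖f (op x y z) - f x - f y - f z‖ ≤ φ x y z) (y : G) :
    ‖f (op y y y) - (3 : ℝ) • f y‖ ≤ φ y y y := by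
  convert hf y y y using 2
  module

theorem stmt_3_general {G : Type*} (op : G → G → G → G)
    {X : Type*} [NormedAddCommGroup X] [NormedSpace ℝ X]
    (φ : G → G → G → ℝ)
    (f : G → X)
    (hf : ∀ x y z : G, ‖f (op x y z) - f x - f y - f z‖ ≤ φ x y z) :
    ∀ (x : G) (n : ℕ), 0 < n →
      ‖((1 : ℝ) / 3) ^ n • f (cubeIter op x n) - f x‖ ≤
        (1 / 3) * ∑ k ∈ Finset.range n,
          ((1 : ℝ) / 3) ^ k * φ (cubeIter op x k) (cubeIter op x k) (cubeIter op x k) := by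
  intro x n _
  exact norm_one_div_pow_smul_sub_le_sum three_pos (fun k ↦ f (cubeIter op x k))
    (fun k ↦ φ (cubeIter op x k) (cubeIter op x k) (cubeIter op x k))
    (fun k ↦ norm_map_cube_sub_three_smul_le op φ f hf (cubeIter op x k)) n

theorem stmt_3 {G : Type*} (op : G → G → G → G)
    (assoc : ∀ x y z u v : G,
      op (op x y z) u v = op x (op y z u) v ∧
      op x (op y z u) v = op x y (op z u v))
    {X : Type*} [NormedAddCommGroup X] [NormedSpace ℝ X]
    (φ : G → G → G → ℝ) (hφ : ∀ x y z, 0 ≤ φ x y z)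
    (f : G → X)
    (hf : ∀ x y z : G, ‖f (op x y z) - f x - f y - f z‖ ≤ φ x y z) :
    ∀ (x : G) (n : ℕ), 0 < n →
      ‖((1 : ℝ) / 3) ^ n • f (cubeIter op x n) - f x‖ ≤
        (1 / 3) * ∑ k ∈ Finset.range n,
          ((1 : ℝ) / 3) ^ k * φ (cubeIter op x k) (cubeIter op x k) (cubeIter op x k) :=
  stmt_3_general op φ f hf
end

section
/- Let G be a ternary semigroup, X a real normed space, and φ : G × G × G → [0,∞). Suppose f : G → X satisfies ‖f([xyz]) − f(x) − f(y) − f(z)‖ ≤ φ(x,y,z) for all x, y, z ∈ G. Then for every x ∈ G and all nonnegative integers m < n, ‖3^{-n} f(x^{3^n}) − 3^{-m} f(x^{3^m})‖ ≤ (1/3)·∑_{k=m}^{n-1} 3^{-k} φ(x^{3^k}, x^{3^k}, x^{3^k}). -/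
theorem third_pow_succ_smul_sub_third_pow_smul {X : Type*} [AddCommGroup X] [Module ℝ X]
    (k : ℕ) (a b : X) :
    ((1 : ℝ) / 3) ^ (k + 1) • a - ((1 : ℝ) / 3) ^ k • b =
      ((1 : ℝ) / 3) ^ (k + 1) • (a - b - b - b) := by
  rw [pow_succ]
  module

theorem norm_third_pow_smul_cube_sub_le {G X : Type*} [NormedAddCommGroup X] [NormedSpace ℝ X]
    {op : G → G → G → G} {φ : G → G → G → ℝ} {f : G → X}
    (hf : ∀ x y z : G, ‖f (op x y z) - f x - f y - f z‖ ≤ φ x y z) (k : ℕ) (c : G) :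
    ‖((1 : ℝ) / 3) ^ (k + 1) • f (op c c c) - ((1 : ℝ) / 3) ^ k • f c‖ ≤
      1 / 3 * (((1 : ℝ) / 3) ^ k * φ c c c) := by
  rw [third_pow_succ_smul_sub_third_pow_smul, norm_smul, Real.norm_of_nonneg (by positivity),
    pow_succ, mul_comm _ (1 / 3 : ℝ), mul_assoc]
  gcongr
  exact hf c c c

theorem stmt_4_general {G : Type*} (op : G → G → G → G)
    {X : Type*} [NormedAddCommGroup X] [NormedSpace ℝ X]
    (φ : G → G → G → ℝ)
    (f : G → X)
    (hf : ∀ x y z : G, ‖f (op x y z) - f x - f y - f z‖ ≤ φ x y z) :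
    ∀ (x : G) (m n : ℕ), m < n →
      ‖((1 : ℝ) / 3) ^ n • f (cubeIter op x n) - ((1 : ℝ) / 3) ^ m • f (cubeIter op x m)‖ ≤
        (1 / 3) * ∑ k ∈ Finset.Ico m n,
          ((1 : ℝ) / 3) ^ k * φ (cubeIter op x k) (cubeIter op x k) (cubeIter op x k) := by
  intro x m n hmn
  rw [← dist_eq_norm, dist_comm, Finset.mul_sum]
  refine dist_le_Ico_sum_of_dist_le (f := fun k ↦ ((1 : ℝ) / 3) ^ k • f (cubeIter op x k))
    hmn.le fun {k} _ _ ↦ ?_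
  rw [dist_comm, dist_eq_norm]
  exact norm_third_pow_smul_cube_sub_le hf k (cubeIter op x k)

theorem stmt_4 {G : Type*} (op : G → G → G → G)
    (assoc : ∀ x y z u v : G,
      op (op x y z) u v = op x (op y z u) v ∧
      op x (op y z u) v = op x y (op z u v))
    {X : Type*} [NormedAddCommGroup X] [NormedSpace ℝ X]
    (φ : G → G → G → ℝ) (hφ : ∀ x y z, 0 ≤ φ x y z)
    (f : G → X)
    (hf : ∀ x y z : G, ‖f (op x y z) - f x - f y - f z‖ ≤ φ x y z) :
    ∀ (x : G) (m n : ℕ), m < n →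
      ‖((1 : ℝ) / 3) ^ n • f (cubeIter op x n) - ((1 : ℝ) / 3) ^ m • f (cubeIter op x m)‖ ≤
        (1 / 3) * ∑ k ∈ Finset.Ico m n,
          ((1 : ℝ) / 3) ^ k * φ (cubeIter op x k) (cubeIter op x k) (cubeIter op x k) :=
  stmt_4_general op φ f hf
end

section
/- Let G be a ternary semigroup, X a real Banach space, and φ : G × G × G → [0,∞) a function such that for all x, y, z ∈ G the series (1/3)·∑_{n=0}^∞ 3^{-n} φ(x^{3^n}, y^{3^n}, z^{3^n}) converges. If f : G → X satisfies ‖f([xyz]) − f(x) − f(y) − f(z)‖ ≤ φ(x,y,z) for all x, y, z ∈ G, then for each x ∈ G the sequence (3^{-n} f(x^{3^n}))_{n≥0} converges in X. -/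
open Filter Topology

/-! Since `x^{3^{n+1}} = [x^{3^n} x^{3^n} x^{3^n}]`, the hypothesis on `f` at `(x^{3^n}, x^{3^n}, x^{3^n})`
bounds consecutive differences of `3^{-n} f(x^{3^n})` by `3^{-(n+1)} φ(x^{3^n}, x^{3^n}, x^{3^n})`,
a summable sequence; so the sequence is Cauchy, and `X` is complete. -/

section

variable {X : Type*} [NormedAddCommGroup X] [NormedSpace ℝ X]

lemma dist_pow_smul_succ (r : ℝ) (u : ℕ → X) (n : ℕ) :
    dist (r ^ n • u n) (r ^ (n + 1) • u (n + 1)) = |r| ^ n * ‖u n - r • u (n + 1)‖ := by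
  rw [dist_eq_norm, pow_succ, mul_smul, ← smul_sub, norm_smul, Real.norm_eq_abs, abs_pow]

lemma cauchySeq_pow_smul_of_summable {r : ℝ} {u : ℕ → X}
    (h : Summable fun n => |r| ^ n * ‖u n - r • u (n + 1)‖) :
    CauchySeq fun n => r ^ n • u n :=
  cauchySeq_of_dist_le_of_summable _ (fun n => (dist_pow_smul_succ r u n).le) h

lemma norm_sub_third_smul_le {u v : X} {b : ℝ} (h : ‖v - u - u - u‖ ≤ b) :
    ‖u - ((1 : ℝ) / 3) • v‖ ≤ (1 / 3) * b := by
  have hdiff : u - ((1 : ℝ) / 3) • v = -(((1 : ℝ) / 3) • (v - u - u - u)) := by module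
  rw [hdiff, norm_neg, norm_smul, Real.norm_of_nonneg (by norm_num)]
  gcongr

end

theorem stmt_5_general {G : Type*} (op : G → G → G → G)
    {X : Type*} [NormedAddCommGroup X] [NormedSpace ℝ X] [CompleteSpace X]
    (φ : G → G → G → ℝ)
    (hconv : ∀ x y z : G, Summable (fun n : ℕ =>
      ((1 : ℝ) / 3) ^ n * φ (cubeIter op x n) (cubeIter op y n) (cubeIter op z n)))
    (f : G → X)
    (hf : ∀ x y z : G, ‖f (op x y z) - f x - f y - f z‖ ≤ φ x y z) :
    ∀ x : G, ∃ L : X,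
      Tendsto (fun n : ℕ => ((1 : ℝ) / 3) ^ n • f (cubeIter op x n)) atTop (𝓝 L) := by
  intro x
  set c : ℕ → G := cubeIter op x
  have hstep (n : ℕ) : ‖f (c n) - ((1 : ℝ) / 3) • f (c (n + 1))‖ ≤ 1 / 3 * φ (c n) (c n) (c n) :=
    norm_sub_third_smul_le (hf (c n) (c n) (c n))
  have hsum : Summable fun n => |(1 : ℝ) / 3| ^ n * ‖f (c n) - ((1 : ℝ) / 3) • f (c (n + 1))‖ := by
    refine .of_nonneg_of_le (fun n => by positivity) (fun n => ?_) ((hconv x x x).mul_left (1 / 3))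
    rw [abs_of_pos (by norm_num : (0 : ℝ) < 1 / 3), mul_left_comm]
    gcongr
    exact hstep n
  exact cauchySeq_tendsto_of_complete (cauchySeq_pow_smul_of_summable hsum)

theorem stmt_5 {G : Type*} (op : G → G → G → G)
    (assoc : ∀ x y z u v : G,
      op (op x y z) u v = op x (op y z u) v ∧
      op x (op y z u) v = op x y (op z u v))
    {X : Type*} [NormedAddCommGroup X] [NormedSpace ℝ X] [CompleteSpace X]
    (φ : G → G → G → ℝ) (hφ : ∀ x y z, 0 ≤ φ x y z)
    (hconv : ∀ x y z : G, Summable (fun n : ℕ =>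
      ((1 : ℝ) / 3) ^ n * φ (cubeIter op x n) (cubeIter op y n) (cubeIter op z n)))
    (f : G → X)
    (hf : ∀ x y z : G, ‖f (op x y z) - f x - f y - f z‖ ≤ φ x y z) :
    ∀ x : G, ∃ L : X,
      Tendsto (fun n : ℕ => ((1 : ℝ) / 3) ^ n • f (cubeIter op x n)) atTop (𝓝 L) :=
  stmt_5_general op φ hconv f hf
end

section
/- Let G be a ternary semigroup, X a real Banach space, and ε > 0. Suppose f : G → X satisfies ‖f([xyz]) − f(x) − f(y) − f(z)‖ ≤ ε for all x, y, z ∈ G. Then there exists a unique mapping T : G → X such that T(x³) = 3·T(x) and ‖f(x) − T(x)‖ ≤ ε/2 for all x ∈ G. If moreover G is commutative, then T([xyz]) = T(x) + T(y) + T(z) for all x, y, z ∈ G. -/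
open Filter Topology

/-!
Hyers' direct method. Put `c x = [x x x]`. Taking `x = y = z` in the hypothesis gives
`‖f (c x) - 3 f x‖ ≤ ε`, so `3⁻ⁿ f (cⁿ x)` is Cauchy with geometrically small steps; its limit `T`
satisfies `T (c x) = 3 T x` and lies within `ε / (3 - 1)` of `f`. Two such maps differ by a bounded
`T - T'` that is multiplied by `3ⁿ` along `cⁿ`, hence coincide. In the commutative case
`c` is an endomorphism of the ternary operation, so the defect of `T` at `(x, y, z)` is the limit of
`3⁻ⁿ` times a defect of `f`, which is at most `3⁻ⁿ ε`.
-/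

section Cube

variable {G : Type*} (op : G → G → G → G)

theorem op_op_swap_mid
    (assoc : ∀ x y z u v : G, op (op x y z) u v = op x (op y z u) v ∧
      op x (op y z u) v = op x y (op z u v))
    (comm₁₂ : ∀ x y z : G, op x y z = op y x z) (a b c d e : G) :
    op (op a b c) d e = op (op a b d) c e := by
  rw [(assoc a b c d e).1, (assoc a b c d e).2, comm₁₂ c d e,
    ← (assoc a b d c e).2, ← (assoc a b d c e).1]

theorem cube_op_eq_op_cube
    (assoc : ∀ x y z u v : G, op (op x y z) u v = op x (op y z u) v ∧
      op x (op y z u) v = op x y (op z u v))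
    (comm₂₃ : ∀ x y z : G, op x y z = op x z y) (comm₁₂ : ∀ x y z : G, op x y z = op y x z)
    (x y z : G) :
    op (op x y z) (op x y z) (op x y z) = op (op x x x) (op y y y) (op z z z) := by
  have assoc' : ∀ x y z u v : G, op (op x y z) u v = op x y (op z u v) :=
    fun x y z u v => (assoc x y z u v).1.trans (assoc x y z u v).2
  have swap := op_op_swap_mid op assoc comm₁₂
  -- both sides, written as left-normed products of nine factors
  rw [← assoc' (op x y z) (op x y z) x y z, ← (assoc (op x y z) x y z x).1,
    ← assoc' (op x x x) (op y y y) z z z, ← (assoc (op x x x) y y y z).1]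
  calc op (op (op (op x y z) x y) z x) y z
      = op (op (op (op x x y) z y) z x) y z := by rw [swap x y z x y, comm₂₃ x y x]
    _ = op (op (op (op x x y) z x) y z) y z := by
      rw [comm₂₃ (op (op x x y) z y) z x, swap (op x x y) z y x z]
    _ = op (op (op (op x x x) y y) z z) y z := by
      rw [comm₂₃ (op x x y) z x, swap x x y x z, swap (op x x x) y z y z]
    _ = op (op (op (op x x x) y y) y z) z z := by
      rw [swap (op (op x x x) y y) z z y z, comm₂₃ (op (op x x x) y y) z y]

end Cube

theorem iterate_map_op {G : Type*} {op : G → G → G → G} {c : G → G}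
    (hc : ∀ x y z, c (op x y z) = op (c x) (c y) (c z)) (n : ℕ) (x y z : G) :
    c^[n] (op x y z) = op (c^[n] x) (c^[n] y) (c^[n] z) := by
  induction n with
  | zero => rfl
  | succ n ih => simp only [Function.iterate_succ_apply', ih, hc]

theorem tendsto_const_mul_inv_pow_atTop {r : ℝ} (hr : 1 < r) (M : ℝ) :
    Tendsto (fun n : ℕ => M * r⁻¹ ^ n) atTop (𝓝 0) := by
  simpa using (tendsto_pow_atTop_nhds_zero_of_lt_one (by positivity)
    (inv_lt_one_of_one_lt₀ hr)).const_mul M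

section Hyers

variable {G X : Type*} [NormedAddCommGroup X] [NormedSpace ℝ X] {r δ : ℝ} {c : G → G}
  {f : G → X}

noncomputable def hyersSeq (r : ℝ) (c : G → G) (f : G → X) (x : G) (n : ℕ) : X :=
  r⁻¹ ^ n • f (c^[n] x)

noncomputable def hyersLimit (r : ℝ) (c : G → G) (f : G → X) (x : G) : X :=
  limUnder atTop (hyersSeq r c f x)

theorem hyersSeq_map (hr : r ≠ 0) (x : G) (n : ℕ) :
    hyersSeq r c f (c x) n = r • hyersSeq r c f x (n + 1) := by
  rw [hyersSeq, hyersSeq, ← Function.iterate_succ_apply, smul_smul, pow_succ,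
    mul_left_comm, mul_inv_cancel₀ hr, mul_one]

theorem dist_hyersSeq_succ_le (hr : 1 < r) (hf : ∀ x, ‖f (c x) - r • f x‖ ≤ δ) (x : G) (n : ℕ) :
    dist (hyersSeq r c f x n) (hyersSeq r c f x (n + 1)) ≤ δ / r * r⁻¹ ^ n := by
  have hr₀ : r ≠ 0 := by positivity
  have h : hyersSeq r c f x (n + 1) - hyersSeq r c f x n
      = r⁻¹ ^ (n + 1) • (f (c (c^[n] x)) - r • f (c^[n] x)) := by
    rw [hyersSeq, hyersSeq, Function.iterate_succ_apply', smul_sub, smul_smul, pow_succ,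
      mul_assoc, inv_mul_cancel₀ hr₀, mul_one]
  rw [dist_comm, dist_eq_norm, h, norm_smul, norm_pow, norm_inv,
    Real.norm_of_nonneg (by positivity)]
  calc (r⁻¹) ^ (n + 1) * ‖f (c (c^[n] x)) - r • f (c^[n] x)‖ ≤ r⁻¹ ^ (n + 1) * δ :=
        mul_le_mul_of_nonneg_left (hf _) (by positivity)
    _ = δ / r * r⁻¹ ^ n := by rw [pow_succ]; ring

theorem eq_of_map_eq_smul_of_norm_sub_le (hr : 1 < r) {T T' : G → X} {M : ℝ}
    (hT : ∀ x, T (c x) = r • T x) (hT' : ∀ x, T' (c x) = r • T' x)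
    (hM : ∀ x, ‖T x - T' x‖ ≤ M) : T = T' := by
  funext x
  have hiter : ∀ S : G → X, (∀ x, S (c x) = r • S x) → ∀ n, S (c^[n] x) = r ^ n • S x := by
    intro S hS n
    induction n with
    | zero => simp
    | succ n ih => rw [Function.iterate_succ_apply', hS, ih, smul_smul, pow_succ']
  have hle : ∀ n : ℕ, ‖T x - T' x‖ ≤ M * r⁻¹ ^ n := fun n => by
    have h := hM (c^[n] x)
    rw [hiter T hT, hiter T' hT', ← smul_sub, norm_smul, norm_pow,
      Real.norm_of_nonneg (by positivity : (0:ℝ) ≤ r)] at h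
    rw [inv_pow, ← div_eq_mul_inv, le_div_iff₀ (by positivity), mul_comm]
    exact h
  exact sub_eq_zero.mp (norm_le_zero_iff.mp
    (ge_of_tendsto' (tendsto_const_mul_inv_pow_atTop hr M) hle))

variable [CompleteSpace X]

theorem tendsto_hyersSeq (hr : 1 < r) (hf : ∀ x, ‖f (c x) - r • f x‖ ≤ δ) (x : G) :
    Tendsto (hyersSeq r c f x) atTop (𝓝 (hyersLimit r c f x)) :=
  (cauchySeq_of_le_geometric _ _ (inv_lt_one_of_one_lt₀ hr)
    (dist_hyersSeq_succ_le hr hf x)).tendsto_limUnder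

theorem norm_sub_hyersLimit_le (hr : 1 < r) (hf : ∀ x, ‖f (c x) - r • f x‖ ≤ δ) (x : G) :
    ‖f x - hyersLimit r c f x‖ ≤ δ / (r - 1) := by
  have h := dist_le_of_le_geometric_of_tendsto₀ _ _ (inv_lt_one_of_one_lt₀ hr)
    (dist_hyersSeq_succ_le hr hf x) (tendsto_hyersSeq hr hf x)
  have hr₀ : r ≠ 0 := by positivity
  have hr₁ : r - 1 ≠ 0 := by linarith
  rwa [hyersSeq, pow_zero, one_smul, Function.iterate_zero_apply, dist_eq_norm,
    show δ / r / (1 - r⁻¹) = δ / (r - 1) by field_simp] at h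

theorem hyersLimit_map (hr : 1 < r) (hf : ∀ x, ‖f (c x) - r • f x‖ ≤ δ) (x : G) :
    hyersLimit r c f (c x) = r • hyersLimit r c f x := by
  have h : Tendsto (hyersSeq r c f (c x)) atTop (𝓝 (r • hyersLimit r c f x)) := by
    simp_rw [funext (hyersSeq_map (f := f) (by positivity : r ≠ 0) x)]
    exact ((tendsto_hyersSeq hr hf x).comp (tendsto_add_atTop_nat 1)).const_smul r
  exact tendsto_nhds_unique (tendsto_hyersSeq hr hf (c x)) h

theorem hyersLimit_op (hr : 1 < r) (hf : ∀ x, ‖f (c x) - r • f x‖ ≤ δ) {op : G → G → G → G}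
    (hc : ∀ x y z, c (op x y z) = op (c x) (c y) (c z)) {ε : ℝ}
    (hop : ∀ x y z, ‖f (op x y z) - f x - f y - f z‖ ≤ ε) (x y z : G) :
    hyersLimit r c f (op x y z) =
      hyersLimit r c f x + hyersLimit r c f y + hyersLimit r c f z := by
  set e := fun n => hyersSeq r c f (op x y z) n - hyersSeq r c f x n - hyersSeq r c f y n
    - hyersSeq r c f z n
  have he_le : ∀ n, ‖e n‖ ≤ ε * r⁻¹ ^ n := fun n => by
    simp only [e, hyersSeq, iterate_map_op hc, ← smul_sub, norm_smul, norm_pow, norm_inv,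
      Real.norm_of_nonneg (by positivity : (0:ℝ) ≤ r), mul_comm ε]
    exact mul_le_mul_of_nonneg_left (hop _ _ _) (by positivity)
  have he_zero : Tendsto e atTop (𝓝 0) :=
    squeeze_zero_norm he_le (tendsto_const_mul_inv_pow_atTop hr ε)
  have he_lim := (((tendsto_hyersSeq hr hf (op x y z)).sub (tendsto_hyersSeq hr hf x)).sub
    (tendsto_hyersSeq hr hf y)).sub (tendsto_hyersSeq hr hf z)
  rw [← sub_eq_zero, ← sub_sub, ← sub_sub]
  exact tendsto_nhds_unique he_lim he_zero

end Hyers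

theorem stmt_6_general {G : Type*} (op : G → G → G → G)
    (assoc : ∀ x y z u v : G,
      op (op x y z) u v = op x (op y z u) v ∧
      op x (op y z u) v = op x y (op z u v))
    {X : Type*} [NormedAddCommGroup X] [NormedSpace ℝ X] [CompleteSpace X]
    (ε : ℝ) (f : G → X)
    (hf : ∀ x y z : G, ‖f (op x y z) - f x - f y - f z‖ ≤ ε) :
    ∃ T : G → X,
      (∀ x : G, T (op x x x) = (3 : ℝ) • T x) ∧
      (∀ x : G, ‖f x - T x‖ ≤ ε / 2) ∧
      (∀ T' : G → X, (∀ x : G, T' (op x x x) = (3 : ℝ) • T' x) →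
        (∀ x : G, ‖f x - T' x‖ ≤ ε / 2) → T' = T) ∧
      ((∀ x y z : G,
          op x y z = op x z y ∧ op x y z = op y x z ∧ op x y z = op y z x ∧
          op x y z = op z x y ∧ op x y z = op z y x) →
        ∀ x y z : G, T (op x y z) = T x + T y + T z) := by
  have h3 : (1 : ℝ) < 3 := by norm_num
  have hcube : ∀ x, ‖f (op x x x) - (3 : ℝ) • f x‖ ≤ ε := fun x => by
    rw [show (3 : ℝ) • f x = f x + f x + f x by module, ← sub_sub, ← sub_sub]
    exact hf x x x
  set T := hyersLimit 3 (fun x => op x x x) f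
  have hT_near : ∀ x, ‖f x - T x‖ ≤ ε / 2 := fun x => by
    simpa [show (3 : ℝ) - 1 = 2 by norm_num] using norm_sub_hyersLimit_le h3 hcube x
  refine ⟨T, hyersLimit_map h3 hcube, hT_near, fun T' hT' hT'_near => ?_, fun hcomm => ?_⟩
  · refine eq_of_map_eq_smul_of_norm_sub_le h3 hT' (hyersLimit_map h3 hcube) (M := ε) fun x => ?_
    calc ‖T' x - T x‖ = ‖(f x - T x) - (f x - T' x)‖ := by congr 1; abel
      _ ≤ ε / 2 + ε / 2 := (norm_sub_le _ _).trans (add_le_add (hT_near x) (hT'_near x))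
      _ = ε := add_halves ε
  · exact hyersLimit_op h3 hcube (cube_op_eq_op_cube op assoc (fun x y z => (hcomm x y z).1)
      (fun x y z => (hcomm x y z).2.1)) hf

theorem stmt_6 {G : Type*} (op : G → G → G → G)
    (assoc : ∀ x y z u v : G,
      op (op x y z) u v = op x (op y z u) v ∧
      op x (op y z u) v = op x y (op z u v))
    {X : Type*} [NormedAddCommGroup X] [NormedSpace ℝ X] [CompleteSpace X]
    (ε : ℝ) (hε : 0 < ε) (f : G → X)
    (hf : ∀ x y z : G, ‖f (op x y z) - f x - f y - f z‖ ≤ ε) :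
    ∃ T : G → X,
      (∀ x : G, T (op x x x) = (3 : ℝ) • T x) ∧
      (∀ x : G, ‖f x - T x‖ ≤ ε / 2) ∧
      (∀ T' : G → X, (∀ x : G, T' (op x x x) = (3 : ℝ) • T' x) →
        (∀ x : G, ‖f x - T' x‖ ≤ ε / 2) → T' = T) ∧
      ((∀ x y z : G,
          op x y z = op x z y ∧ op x y z = op y x z ∧ op x y z = op y z x ∧
          op x y z = op z x y ∧ op x y z = op z y x) →
        ∀ x y z : G, T (op x y z) = T x + T y + T z) :=
  stmt_6_general op assoc ε f hf
end

section
/- Let G be a ternary semigroup and A a real normed ring whose norm is multiplicative, i.e. ‖ab‖ = ‖a‖·‖b‖ for all a, b ∈ A. Let ε ≥ 0 and suppose f : G → A satisfies ‖f([xyz]) − f(x)·f(y)·f(z)‖ ≤ ε for all x, y, z ∈ G. Then either ‖f(x)‖ ≤ δ for all x ∈ G, where δ = (1 + √(1 + 4ε))/2, or f([xyz]) = f(x)·f(y)·f(z) for all x, y, z ∈ G. -/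
/-!
If some value has norm above `δ`, iterate `g ↦ [g g g]` from it: since `δ ≥ 1` and
`δ² = δ + ε`, the map `t ↦ t³ - ε` at least doubles the distance `t - δ`, so `‖f‖` is unbounded.
For unbounded `f`, comparing the two evaluations of `f [[xyz] u u] = f [x [yzu] u]` bounds the
defect `D = f [xyz] - f x f y f z` by `‖D‖ ‖f u‖² ≤ 2ε + ε ‖f x‖ ‖f u‖`;
letting `‖f u‖ → ∞` forces `D = 0`.
-/

open Set

lemma nonpos_of_mul_sq_le_of_not_bddAbove {S : Set ℝ} {a b c : ℝ} (hS : ¬BddAbove S)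
    (h : ∀ t ∈ S, c * t ^ 2 ≤ a + b * t) : c ≤ 0 := by
  by_contra! hc
  obtain ⟨t, htS, ht⟩ := not_bddAbove_iff.mp hS (max 1 ((|a| + |b|) / c))
  have ht1 : 1 < t := lt_of_le_of_lt (le_max_left _ _) ht
  have hct : |a| + |b| < c * t := by
    rw [← div_lt_iff₀' hc]; exact lt_of_le_of_lt (le_max_right _ _) ht
  have hat : a ≤ |a| * t :=
    (le_abs_self a).trans (le_mul_of_one_le_right (abs_nonneg a) ht1.le)
  have hbt : b * t ≤ |b| * t := mul_le_mul_of_nonneg_right (le_abs_self b) (by linarith)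
  nlinarith [h t htS]

lemma two_mul_sub_le_of_pow_three_sub_le {δ ε t s : ℝ} (hδ : 1 ≤ δ) (hδε : δ + ε ≤ δ ^ 2)
    (ht : δ ≤ t) (hs : t ^ 3 - ε ≤ s) : 2 * (t - δ) ≤ s - δ := by
  have hcube : t ^ 2 ≤ t ^ 3 := by
    nlinarith [mul_nonneg (sq_nonneg t) (sub_nonneg.mpr (hδ.trans ht))]
  nlinarith [mul_nonneg (sub_nonneg.mpr ht) (by linarith : 0 ≤ t + δ - 2)]

section ApproximateTernaryHom

variable {G A : Type*} [NormedRing A] [NormMulClass A] {op : G → G → G → G} {f : G → A}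
  {ε : ℝ}

lemma pow_three_sub_le_norm_map_cube
    (hf : ∀ x y z : G, ‖f (op x y z) - f x * f y * f z‖ ≤ ε) (g : G) :
    ‖f g‖ ^ 3 - ε ≤ ‖f (op g g g)‖ := by
  have h := norm_sub_norm_le (f g * f g * f g) (f (op g g g))
  rw [norm_sub_rev] at h
  simp only [norm_mul] at h
  linarith [hf g g g]

lemma two_pow_mul_le_norm_map_iterate_cube {δ : ℝ} (hδ : 1 ≤ δ) (hδε : δ + ε ≤ δ ^ 2)
    (hf : ∀ x y z : G, ‖f (op x y z) - f x * f y * f z‖ ≤ ε) {a : G} (ha : δ ≤ ‖f a‖)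
    (n : ℕ) :
    2 ^ n * (‖f a‖ - δ) ≤ ‖f ((fun g => op g g g)^[n] a)‖ - δ := by
  induction n with
  | zero => simp
  | succ n ih =>
    rw [Function.iterate_succ_apply', pow_succ]
    have hn : δ ≤ ‖f ((fun g => op g g g)^[n] a)‖ := by
      nlinarith [pow_pos (two_pos : (0 : ℝ) < 2) n]
    linarith [two_mul_sub_le_of_pow_three_sub_le hδ hδε hn
      (pow_three_sub_le_norm_map_cube hf _)]

lemma not_bddAbove_norm_of_lt_norm {δ : ℝ} (hδ : 1 ≤ δ) (hδε : δ + ε ≤ δ ^ 2)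
    (hf : ∀ x y z : G, ‖f (op x y z) - f x * f y * f z‖ ≤ ε) {a : G} (ha : δ < ‖f a‖) :
    ¬BddAbove (range fun x => ‖f x‖) := by
  refine not_bddAbove_iff.mpr fun M => ?_
  obtain ⟨n, hn⟩ := pow_unbounded_of_one_lt ((M - δ) / (‖f a‖ - δ)) one_lt_two
  rw [div_lt_iff₀ (sub_pos.mpr ha)] at hn
  exact ⟨_, mem_range_self ((fun g => op g g g)^[n] a),
    by linarith [two_pow_mul_le_norm_map_iterate_cube hδ hδε hf ha.le n]⟩

lemma norm_defect_mul_sq_le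
    (assoc : ∀ x y z u v : G, op (op x y z) u v = op x (op y z u) v)
    (hf : ∀ x y z : G, ‖f (op x y z) - f x * f y * f z‖ ≤ ε) (x y z u : G) :
    ‖f (op x y z) - f x * f y * f z‖ * ‖f u‖ ^ 2 ≤ 2 * ε + ε * ‖f x‖ * ‖f u‖ := by
  have hid : (f (op x y z) - f x * f y * f z) * f u * f u =
      -(f (op (op x y z) u u) - f (op x y z) * f u * f u) +
      (f (op x (op y z u) u) - f x * f (op y z u) * f u) +
      f x * (f (op y z u) - f y * f z * f u) * f u := by
    rw [assoc]; noncomm_ring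
  have h3 : ‖f x * (f (op y z u) - f y * f z * f u) * f u‖ ≤ ε * ‖f x‖ * ‖f u‖ := by
    rw [norm_mul, norm_mul]
    nlinarith [hf y z u, mul_nonneg (norm_nonneg (f x)) (norm_nonneg (f u))]
  calc ‖f (op x y z) - f x * f y * f z‖ * ‖f u‖ ^ 2
      = ‖(f (op x y z) - f x * f y * f z) * f u * f u‖ := by simp only [norm_mul]; ring
    _ ≤ ‖f (op (op x y z) u u) - f (op x y z) * f u * f u‖ +
        ‖f (op x (op y z u) u) - f x * f (op y z u) * f u‖ +
        ‖f x * (f (op y z u) - f y * f z * f u) * f u‖ := by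
      rw [hid, ← norm_neg (f (op (op x y z) u u) - _)]; exact norm_add₃_le
    _ ≤ 2 * ε + ε * ‖f x‖ * ‖f u‖ := by
      linarith [hf (op x y z) u u, hf x (op y z u) u]

lemma map_op_of_not_bddAbove_norm
    (assoc : ∀ x y z u v : G, op (op x y z) u v = op x (op y z u) v)
    (hf : ∀ x y z : G, ‖f (op x y z) - f x * f y * f z‖ ≤ ε)
    (hunb : ¬BddAbove (range fun x => ‖f x‖)) (x y z : G) :
    f (op x y z) = f x * f y * f z := by
  rw [← sub_eq_zero, ← norm_le_zero_iff]
  refine nonpos_of_mul_sq_le_of_not_bddAbove (a := 2 * ε) (b := ε * ‖f x‖) hunb ?_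
  rintro _ ⟨u, rfl⟩
  exact norm_defect_mul_sq_le assoc hf x y z u

end ApproximateTernaryHom

theorem stmt_7 {G : Type*} (op : G → G → G → G)
    (assoc : ∀ x y z u v : G,
      op (op x y z) u v = op x (op y z u) v ∧
      op x (op y z u) v = op x y (op z u v))
    {A : Type*} [NormedRing A]
    (hmul : ∀ a b : A, ‖a * b‖ = ‖a‖ * ‖b‖)
    (ε : ℝ) (hε : 0 ≤ ε) (f : G → A)
    (hf : ∀ x y z : G, ‖f (op x y z) - f x * f y * f z‖ ≤ ε) :
    (∀ x : G, ‖f x‖ ≤ (1 + Real.sqrt (1 + 4 * ε)) / 2) ∨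
      (∀ x y z : G, f (op x y z) = f x * f y * f z) := by
  have : NormMulClass A := ⟨hmul⟩
  set δ := (1 + Real.sqrt (1 + 4 * ε)) / 2 with hδ_def
  have hsq : Real.sqrt (1 + 4 * ε) ^ 2 = 1 + 4 * ε := Real.sq_sqrt (by linarith)
  have hδ : 1 ≤ δ := by
    have : 1 ≤ Real.sqrt (1 + 4 * ε) := Real.one_le_sqrt.mpr (by linarith)
    rw [hδ_def]; linarith
  have hδε : δ + ε ≤ δ ^ 2 := by rw [hδ_def]; nlinarith
  by_cases hbdd : ∀ x : G, ‖f x‖ ≤ δ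
  · exact Or.inl hbdd
  · push Not at hbdd
    obtain ⟨a, ha⟩ := hbdd
    exact Or.inr (map_op_of_not_bddAbove_norm (fun x y z u v => (assoc x y z u v).1) hf
      (not_bddAbove_norm_of_lt_norm hδ hδε hf ha))
end

section
/- Let G be a ternary semigroup, A a real normed ring whose norm is multiplicative (‖ab‖ = ‖a‖·‖b‖ for all a, b ∈ A), ε ≥ 0, and δ > 1 with δ² − δ = ε. Suppose f : G → A satisfies ‖f([xyz]) − f(x)·f(y)·f(z)‖ ≤ ε for all x, y, z ∈ G. If u ∈ G and p > 0 satisfy ‖f(u)‖ = δ + p, then ‖f(u^{3^n})‖ ≥ δ + (n+1)·p for every positive integer n. -/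
theorem norm_pow_three_sub_le_norm_cube {G A : Type*} [NormedRing A] (op : G → G → G → G)
    (hmul : ∀ a b : A, ‖a * b‖ = ‖a‖ * ‖b‖) {ε : ℝ} {f : G → A}
    (hf : ∀ x y z : G, ‖f (op x y z) - f x * f y * f z‖ ≤ ε) (x : G) :
    ‖f x‖ ^ 3 - ε ≤ ‖f (op x x x)‖ :=
  calc ‖f x‖ ^ 3 - ε = ‖f x * f x * f x‖ - ε := by rw [hmul, hmul]; ring
    _ ≤ ‖f (op x x x)‖ := by
      linarith [norm_le_norm_add_norm_sub (f (op x x x)) (f x * f x * f x), hf x x x]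

theorem add_add_le_pow_three_sub {δ p q : ℝ} (hδ : 1 ≤ δ) (hp : 0 ≤ p) (hpq : p ≤ q) :
    δ + q + p ≤ (δ + q) ^ 3 - (δ ^ 2 - δ) := by
  nlinarith [mul_nonneg (sub_nonneg.2 hδ) (sq_nonneg δ), mul_le_mul_of_nonneg_right
    (one_le_pow₀ hδ : 1 ≤ δ ^ 2) (hp.trans hpq), mul_nonneg (hp.trans hpq) (sq_nonneg q),
    mul_nonneg (mul_nonneg (hp.trans hpq) (hp.trans hpq)) (zero_le_one.trans hδ)]

theorem le_norm_cubeIter {G A : Type*} [NormedRing A] (op : G → G → G → G)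
    (hmul : ∀ a b : A, ‖a * b‖ = ‖a‖ * ‖b‖) {δ p : ℝ} (hδ : 1 ≤ δ) (hp : 0 ≤ p) {f : G → A}
    (hf : ∀ x y z : G, ‖f (op x y z) - f x * f y * f z‖ ≤ δ ^ 2 - δ) {u : G}
    (hu : δ + p ≤ ‖f u‖) (n : ℕ) :
    δ + (n + 1) * p ≤ ‖f (cubeIter op u n)‖ := by
  induction n with
  | zero => simpa [cubeIter] using hu
  | succ n ih =>
    have hq : p ≤ (n + 1) * p := le_mul_of_one_le_left hp (by linarith [n.cast_nonneg (α := ℝ)])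
    calc δ + ((n + 1 : ℕ) + 1) * p = δ + (n + 1) * p + p := by push_cast; ring
      _ ≤ (δ + (n + 1) * p) ^ 3 - (δ ^ 2 - δ) := add_add_le_pow_three_sub hδ hp hq
      _ ≤ ‖f (cubeIter op u n)‖ ^ 3 - (δ ^ 2 - δ) := by gcongr
      _ ≤ ‖f (cubeIter op u (n + 1))‖ := norm_pow_three_sub_le_norm_cube op hmul hf _

theorem stmt_8_general {G : Type*} (op : G → G → G → G)
    {A : Type*} [NormedRing A]
    (hmul : ∀ a b : A, ‖a * b‖ = ‖a‖ * ‖b‖)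
    (ε δ : ℝ) (hδ : 1 < δ) (hδε : δ ^ 2 - δ = ε)
    (f : G → A)
    (hf : ∀ x y z : G, ‖f (op x y z) - f x * f y * f z‖ ≤ ε)
    (u : G) (p : ℝ) (hp : 0 < p) (hu : ‖f u‖ = δ + p) :
    ∀ n : ℕ, 0 < n → δ + (n + 1) * p ≤ ‖f (cubeIter op u n)‖ := by
  subst hδε
  exact fun n _ => le_norm_cubeIter op hmul hδ.le hp.le hf hu.ge n

theorem stmt_8 {G : Type*} (op : G → G → G → G)
    (assoc : ∀ x y z u v : G,
      op (op x y z) u v = op x (op y z u) v ∧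
      op x (op y z u) v = op x y (op z u v))
    {A : Type*} [NormedRing A]
    (hmul : ∀ a b : A, ‖a * b‖ = ‖a‖ * ‖b‖)
    (ε δ : ℝ) (hε : 0 ≤ ε) (hδ : 1 < δ) (hδε : δ ^ 2 - δ = ε)
    (f : G → A)
    (hf : ∀ x y z : G, ‖f (op x y z) - f x * f y * f z‖ ≤ ε)
    (u : G) (p : ℝ) (hp : 0 < p) (hu : ‖f u‖ = δ + p) :
    ∀ n : ℕ, 0 < n → δ + (n + 1) * p ≤ ‖f (cubeIter op u n)‖ :=
  stmt_8_general op hmul ε δ hδ hδε f hf u p hp hu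
end

section
/- Let G be a ternary semigroup, A a real normed ring whose norm is multiplicative (‖ab‖ = ‖a‖·‖b‖ for all a, b ∈ A), and ε ≥ 0. If f : G → A satisfies ‖f([xyz]) − f(x)·f(y)·f(z)‖ ≤ ε for all x, y, z ∈ G, then for all x, y, z, t, s ∈ G, ‖f([xyz]) − f(x)·f(y)·f(z)‖·‖f(t)‖·‖f(s)‖ ≤ 2ε + ε·‖f(x)‖·‖f(s)‖. -/
/-! Multiplying the defect of `f` at `[xyz]` on the right by `f t * f s` and comparing both
bracketings of `[[xyz]ts] = [x[yzt]s]` splits it into two defects of `f` and one defect at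
`[yzt]` sandwiched between `f x` and `f s`; the norm being multiplicative on the left-hand side
and submultiplicative on the right gives the bound. -/

theorem sub_mul_mul_eq_sub_add_sub_add_mul_sub_mul {R : Type*} [Ring R] (a b c x y z t s : R) :
    (a - x * y * z) * t * s =
      (a * t * s - b) + (b - x * c * s) + x * (c - y * z * t) * s := by
  noncomm_ring

theorem norm_sub_mul_mul_le {R : Type*} [NormedRing R] {ε : ℝ} {a b c x y z t s : R}
    (hb : ‖b - a * t * s‖ ≤ ε) (hb' : ‖b - x * c * s‖ ≤ ε) (hc : ‖c - y * z * t‖ ≤ ε) :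
    ‖(a - x * y * z) * t * s‖ ≤ 2 * ε + ε * ‖x‖ * ‖s‖ := by
  have hmid : ‖x * (c - y * z * t) * s‖ ≤ ‖x‖ * ε * ‖s‖ :=
    calc ‖x * (c - y * z * t) * s‖ ≤ ‖x‖ * ‖c - y * z * t‖ * ‖s‖ := norm_mul₃_le
      _ ≤ ‖x‖ * ε * ‖s‖ := by gcongr
  calc ‖(a - x * y * z) * t * s‖
      ≤ ‖a * t * s - b‖ + ‖b - x * c * s‖ + ‖x * (c - y * z * t) * s‖ := by
        rw [sub_mul_mul_eq_sub_add_sub_add_mul_sub_mul a b c]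
        exact norm_add₃_le
    _ ≤ ε + ε + ‖x‖ * ε * ‖s‖ := by
        rw [norm_sub_rev]
        gcongr
    _ = 2 * ε + ε * ‖x‖ * ‖s‖ := by ring

theorem stmt_10_general {G : Type*} (op : G → G → G → G)
    (assoc : ∀ x y z u v : G,
      op (op x y z) u v = op x (op y z u) v ∧
      op x (op y z u) v = op x y (op z u v))
    {A : Type*} [NormedRing A]
    (hmul : ∀ a b : A, ‖a * b‖ = ‖a‖ * ‖b‖)
    (ε : ℝ) (f : G → A)
    (hf : ∀ x y z : G, ‖f (op x y z) - f x * f y * f z‖ ≤ ε) :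
    ∀ x y z t s : G,
      ‖f (op x y z) - f x * f y * f z‖ * ‖f t‖ * ‖f s‖ ≤
        2 * ε + ε * ‖f x‖ * ‖f s‖ := by
  intro x y z t s
  have hbracket : f (op (op x y z) t s) = f (op x (op y z t) s) :=
    congrArg f (assoc x y z t s).1
  rw [← hmul, ← hmul]
  refine norm_sub_mul_mul_le (hf (op x y z) t s) ?_ (hf y z t)
  rw [hbracket]
  exact hf x (op y z t) s

theorem stmt_10 {G : Type*} (op : G → G → G → G)
    (assoc : ∀ x y z u v : G,
      op (op x y z) u v = op x (op y z u) v ∧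
      op x (op y z u) v = op x y (op z u v))
    {A : Type*} [NormedRing A]
    (hmul : ∀ a b : A, ‖a * b‖ = ‖a‖ * ‖b‖)
    (ε : ℝ) (hε : 0 ≤ ε) (f : G → A)
    (hf : ∀ x y z : G, ‖f (op x y z) - f x * f y * f z‖ ≤ ε) :
    ∀ x y z t s : G,
      ‖f (op x y z) - f x * f y * f z‖ * ‖f t‖ * ‖f s‖ ≤
        2 * ε + ε * ‖f x‖ * ‖f s‖ :=
  stmt_10_general op assoc hmul ε f hf
end

section
/- Let ε > 0 and let δ be a real number with |δ − δ³| = ε. Define f : ℝ → M₂(ℝ) (the algebra of 2×2 real matrices equipped with the operator norm) by f(x) = the diagonal matrix with entries e^x and δ. Then: (i) ‖f(x+y+z) − f(x)·f(y)·f(z)‖ = ε for all x, y, z ∈ ℝ; (ii) f is unbounded, i.e. for every M there exists x ∈ ℝ with ‖f(x)‖ > M; and (iii) there exist x, y, z ∈ ℝ with f(x+y+z) ≠ f(x)·f(y)·f(z). -/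
open scoped Matrix.Norms.L2Operator
open Matrix

lemma norm_diag2 (a b : ℝ) : ‖(Matrix.diagonal ![a, b] : Matrix (Fin 2) (Fin 2) ℝ)‖ = max |a| |b| := by
  apply le_antisymm
  · rw [Matrix.l2_opNorm_def]
    apply ContinuousLinearMap.opNorm_le_bound _ (le_max_iff.2 (Or.inl (abs_nonneg a)))
    intro x
    simp only [LinearEquiv.trans_apply, LinearMap.coe_toContinuousLinearMap',
      Matrix.toEuclideanLin_apply]
    rw [EuclideanSpace.norm_eq, EuclideanSpace.norm_eq]
    rw [show max |a| |b| * Real.sqrt (∑ i, ‖x i‖ ^ 2) =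
        Real.sqrt ((max |a| |b|)^2 * ∑ i, ‖x i‖ ^ 2) by
      rw [Real.sqrt_mul (by positivity), Real.sqrt_sq (by positivity)]]
    apply Real.sqrt_le_sqrt
    simp only [Fin.sum_univ_two, Real.norm_eq_abs, mul_add]
    have h0 : (Matrix.diagonal ![a, b] *ᵥ x.ofLp) 0 = a * x 0 := by
      simp [Matrix.mulVec_diagonal]
    have h1 : (Matrix.diagonal ![a, b] *ᵥ x.ofLp) 1 = b * x 1 := by
      simp [Matrix.mulVec_diagonal]
    rw [h0, h1, abs_mul, abs_mul, mul_pow, mul_pow]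
    have ha : |a| ≤ max |a| |b| := le_max_left _ _
    have hb : |b| ≤ max |a| |b| := le_max_right _ _
    have ha2 : |a| ^ 2 ≤ (max |a| |b|) ^ 2 := pow_le_pow_left₀ (abs_nonneg a) ha 2
    have hb2 : |b| ^ 2 ≤ (max |a| |b|) ^ 2 := pow_le_pow_left₀ (abs_nonneg b) hb 2
    have p0 : (0:ℝ) ≤ |x 0| ^ 2 := by positivity
    have p1 : (0:ℝ) ≤ |x 1| ^ 2 := by positivity
    exact add_le_add (mul_le_mul_of_nonneg_right ha2 p0) (mul_le_mul_of_nonneg_right hb2 p1)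
  · have key : ∀ i : Fin 2, |(![a,b]) i| ≤ ‖(Matrix.diagonal ![a, b] : Matrix (Fin 2) (Fin 2) ℝ)‖ := by
      intro i
      have h := Matrix.l2_opNorm_mulVec (Matrix.diagonal ![a, b]) (EuclideanSpace.single i 1)
      have hv : Matrix.diagonal ![a,b] *ᵥ (EuclideanSpace.single i (1:ℝ)) = Pi.single i ((![a,b]) i) := by
        funext j
        rw [Matrix.mulVec_diagonal]
        rcases eq_or_ne j i with rfl | hji
        · simp [EuclideanSpace.single_apply]
        · simp [EuclideanSpace.single_apply, hji, Pi.single_eq_of_ne hji]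
      rw [hv] at h
      have h2 : ‖(EuclideanSpace.equiv (Fin 2) ℝ).symm (Pi.single i ((![a,b]) i))‖ = |(![a,b]) i| := by
        rw [show (EuclideanSpace.equiv (Fin 2) ℝ).symm (Pi.single i ((![a,b]) i)) = EuclideanSpace.single i ((![a,b]) i) from rfl]
        rw [EuclideanSpace.norm_single]
        exact Real.norm_eq_abs _
      have h3 : ‖EuclideanSpace.single i (1:ℝ)‖ = 1 := by
        rw [EuclideanSpace.norm_single]; norm_num
      rw [h2, h3, mul_one] at h
      exact h
    exact max_le (by simpa using key 0) (by simpa using key 1)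

theorem stmt_11 (ε : ℝ) (hε : 0 < ε) (δ : ℝ) (hδ : |δ - δ ^ 3| = ε)
    (f : ℝ → Matrix (Fin 2) (Fin 2) ℝ)
    (hfdef : ∀ x : ℝ, f x = Matrix.diagonal ![Real.exp x, δ]) :
    (∀ x y z : ℝ, ‖f (x + y + z) - f x * f y * f z‖ = ε) ∧
    (∀ M : ℝ, ∃ x : ℝ, M < ‖f x‖) ∧
    (∃ x y z : ℝ, f (x + y + z) ≠ f x * f y * f z) := by
  have key : ∀ x y z : ℝ, f (x + y + z) - f x * f y * f z
      = Matrix.diagonal ![0, δ - δ ^ 3] := by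
    intro x y z
    rw [hfdef, hfdef, hfdef, hfdef, Matrix.diagonal_mul_diagonal,
      Matrix.diagonal_mul_diagonal, Matrix.diagonal_sub]
    have hv : (fun i => ![Real.exp (x + y + z), δ] i - ![Real.exp x, δ] i * ![Real.exp y, δ] i * ![Real.exp z, δ] i) = ![0, δ - δ ^ 3] := by
      funext i
      fin_cases i
      · simp [← Real.exp_add]
      · simp; ring
    rw [hv]
  have part1 : ∀ x y z : ℝ, ‖f (x + y + z) - f x * f y * f z‖ = ε := by
    intro x y z
    rw [key, norm_diag2, abs_zero, hδ, max_eq_right hε.le]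
  refine ⟨part1, ?_, ?_⟩
  · intro M
    refine ⟨M, ?_⟩
    rw [hfdef, norm_diag2, abs_of_pos (Real.exp_pos M)]
    calc M < M + 1 := by linarith
    _ ≤ Real.exp M := Real.add_one_le_exp M
    _ ≤ max (Real.exp M) |δ| := le_max_left _ _
  · refine ⟨0, 0, 0, fun h => ?_⟩
    have := part1 0 0 0
    rw [h, sub_self, norm_zero] at this
    exact hε.ne this
end

section
/- Let G be a ternary semigroup, K a field, and V a right invariant vector subspace of the K-valued functions on G (i.e., whenever φ ∈ V and y, z ∈ G, the function x ↦ φ([xyz]) also belongs to V). Let φ, f : G → K be nonzero functions such that for each y, z ∈ G the function x ↦ φ([xyz]) − φ(x)·f(y)·f(z) belongs to V. Then either φ ∈ V, or f([xyz]) = f(x)·f(y)·f(z) for all x, y, z ∈ G. -/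
/-!
Translating the defect `x ↦ φ([xuv]) - φ(x) f(u) f(v)` along `(y, z)` and adding `f(u) f(v)` times
the defect along `(y, z)` gives, by associativity, the defect along `([yzu], v)` up to the multiple
`(f([yzu]) f(v) - f(y) f(z) f(u) f(v)) • φ`. So either `φ ∈ V`, or all these scalars vanish, and
cancelling some `f(v) ≠ 0` shows that `f` is multiplicative.
-/

section TranslationDefect

variable {G K : Type*} [Field K] {op : G → G → G → G} {V : Submodule K (G → K)} {φ f : G → K}

theorem smul_mem_of_translation_defect_mem
    (hassoc : ∀ x y z u v : G, op (op x y z) u v = op x (op y z u) v)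
    (hV : ∀ ψ : G → K, ψ ∈ V → ∀ y z : G, (fun x => ψ (op x y z)) ∈ V)
    (h : ∀ y z : G, (fun x => φ (op x y z) - φ x * f y * f z) ∈ V) (y z u v : G) :
    (f (op y z u) * f v - f y * f z * f u * f v) • φ ∈ V := by
  have hcomb : (fun x => φ (op (op x y z) u v) - φ (op x y z) * f u * f v) +
      (f u * f v) • (fun x => φ (op x y z) - φ x * f y * f z) -
      (fun x => φ (op x (op y z u) v) - φ x * f (op y z u) * f v) ∈ V :=
    V.sub_mem (V.add_mem (hV _ (h u v) y z) (V.smul_mem _ (h y z))) (h (op y z u) v)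
  convert hcomb using 1
  funext x
  simp only [Pi.add_apply, Pi.sub_apply, Pi.smul_apply, smul_eq_mul, hassoc]
  ring

theorem mul_eq_of_translation_defect_mem_of_notMem
    (hassoc : ∀ x y z u v : G, op (op x y z) u v = op x (op y z u) v)
    (hV : ∀ ψ : G → K, ψ ∈ V → ∀ y z : G, (fun x => ψ (op x y z)) ∈ V)
    (h : ∀ y z : G, (fun x => φ (op x y z) - φ x * f y * f z) ∈ V) (hφV : φ ∉ V)
    (y z u v : G) :
    f (op y z u) * f v = f y * f z * f u * f v := by
  by_contra hne
  exact hφV <| (V.smul_mem_iff (sub_ne_zero.mpr hne)).mp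
    (smul_mem_of_translation_defect_mem hassoc hV h y z u v)

end TranslationDefect

theorem stmt_12_general {G : Type*} (op : G → G → G → G)
    (assoc : ∀ x y z u v : G,
      op (op x y z) u v = op x (op y z u) v ∧
      op x (op y z u) v = op x y (op z u v))
    {K : Type*} [Field K]
    (V : Subspace K (G → K))
    (hV : ∀ φ : G → K, φ ∈ V → ∀ y z : G, (fun x => φ (op x y z)) ∈ V)
    (φ f : G → K) (hf : f ≠ 0)
    (h : ∀ y z : G, (fun x => φ (op x y z) - φ x * f y * f z) ∈ V) :
    φ ∈ V ∨ ∀ x y z : G, f (op x y z) = f x * f y * f z := by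
  refine or_iff_not_imp_left.mpr fun hφV x y z => ?_
  obtain ⟨v, hv⟩ := Function.ne_iff.mp hf
  exact mul_right_cancel₀ hv <|
    mul_eq_of_translation_defect_mem_of_notMem (fun x y z u v => (assoc x y z u v).1) hV h hφV
      x y z v

theorem stmt_12 {G : Type*} (op : G → G → G → G)
    (assoc : ∀ x y z u v : G,
      op (op x y z) u v = op x (op y z u) v ∧
      op x (op y z u) v = op x y (op z u v))
    {K : Type*} [Field K]
    (V : Subspace K (G → K))
    (hV : ∀ φ : G → K, φ ∈ V → ∀ y z : G, (fun x => φ (op x y z)) ∈ V)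
    (φ f : G → K) (hφ : φ ≠ 0) (hf : f ≠ 0)
    (h : ∀ y z : G, (fun x => φ (op x y z) - φ x * f y * f z) ∈ V) :
    φ ∈ V ∨ ∀ x y z : G, f (op x y z) = f x * f y * f z :=
  stmt_12_general op assoc V hV φ f hf h
end

section
/- Let G be a ternary semigroup, and let φ, f : G → ℂ be nonzero functions for which there exists a function α : G × G → [0,∞) such that |φ([xyz]) − φ(x)·f(y)·f(z)| ≤ α(y,z) for all x, y, z ∈ G. Then either φ is bounded (i.e. there is M > 0 with |φ(x)| ≤ M for all x ∈ G), or f([xyz]) = f(x)·f(y)·f(z) for all x, y, z ∈ G. -/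
theorem stmt_13 {G : Type*} (op : G → G → G → G)
    (assoc : ∀ x y z u v : G,
      op (op x y z) u v = op x (op y z u) v ∧
      op x (op y z u) v = op x y (op z u v))
    (φ f : G → ℂ) (hφ : φ ≠ 0) (hf : f ≠ 0)
    (α : G → G → ℝ) (hα : ∀ y z : G, 0 ≤ α y z)
    (h : ∀ x y z : G, ‖φ (op x y z) - φ x * f y * f z‖ ≤ α y z) :
    (∃ M : ℝ, 0 < M ∧ ∀ x : G, ‖φ x‖ ≤ M) ∨
      ∀ x y z : G, f (op x y z) = f x * f y * f z := by
  by_cases hb : ∃ M : ℝ, 0 < M ∧ ∀ x : G, ‖φ x‖ ≤ M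
  · exact Or.inl hb
  right
  push_neg at hb
  obtain ⟨v0, hv0⟩ := Function.ne_iff.mp hf
  have key : ∀ y z u v : G, f (op y z u) * f v = f y * f z * f u * f v := by
    intro y z u v
    by_contra hne
    have hd : 0 < ‖f (op y z u) * f v - f y * f z * f u * f v‖ := by
      rw [norm_pos_iff]
      exact sub_ne_zero.mpr hne
    set D := ‖f (op y z u) * f v - f y * f z * f u * f v‖ with hD
    set C := α (op y z u) v + α u v + α y z * ‖f u * f v‖ with hCdef
    have hC : 0 ≤ C := by
      have := hα (op y z u) v
      have := hα u v
      have := hα y z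
      positivity
    obtain ⟨x, hx⟩ := hb (C / D + 1) (by positivity)
    have est : ‖φ x‖ * D ≤ C := by
      have h1 := h x (op y z u) v
      have h2 := h (op x y z) u v
      have h3 := h x y z
      have e : op x (op y z u) v = op (op x y z) u v := ((assoc x y z u v).1).symm
      set A := op x (op y z u) v with hA
      have t1 : ‖φ x * (f (op y z u) * f v) - φ A‖ ≤ α (op y z u) v := by
        have eq1 : φ x * (f (op y z u) * f v) - φ A
            = -(φ A - φ x * f (op y z u) * f v) := by ring
        rw [eq1, norm_neg]
        exact h1
      have t2 : ‖φ A - φ (op x y z) * f u * f v‖ ≤ α u v := by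
        rw [e]; exact h2
      have t3 : ‖φ (op x y z) * f u * f v - φ x * (f y * f z * f u * f v)‖
          ≤ α y z * ‖f u * f v‖ := by
        calc ‖φ (op x y z) * f u * f v - φ x * (f y * f z * f u * f v)‖
            = ‖(φ (op x y z) - φ x * f y * f z) * (f u * f v)‖ := by ring_nf
          _ = ‖φ (op x y z) - φ x * f y * f z‖ * ‖f u * f v‖ := by
              rw [norm_mul]
          _ ≤ α y z * ‖f u * f v‖ := by
              apply mul_le_mul_of_nonneg_right h3 (norm_nonneg _)
      calc ‖φ x‖ * D
          = ‖φ x * (f (op y z u) * f v) - φ x * (f y * f z * f u * f v)‖ := by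
            rw [hD, ← norm_mul, mul_sub]
        _ ≤ ‖φ x * (f (op y z u) * f v) - φ A‖
            + ‖φ A - φ x * (f y * f z * f u * f v)‖ :=
            norm_sub_le_norm_sub_add_norm_sub _ _ _
        _ ≤ ‖φ x * (f (op y z u) * f v) - φ A‖
            + (‖φ A - φ (op x y z) * f u * f v‖
              + ‖φ (op x y z) * f u * f v - φ x * (f y * f z * f u * f v)‖) := by
            gcongr
            exact norm_sub_le_norm_sub_add_norm_sub _ _ _
        _ ≤ C := by rw [hCdef]; linarith
    have : (C / D + 1) * D ≤ C := le_trans (by nlinarith) est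
    have : C + D ≤ C := by
      calc C + D = (C / D + 1) * D := by field_simp
        _ ≤ C := this
    linarith
  intro x y z
  have := key x y z v0
  exact mul_right_cancel₀ hv0 this
end

section
/- Let G be a ternary semigroup, ε > 0, and f : G → ℂ a nonzero function such that |f([xyz]) − f(x)·f(y)·f(z)| ≤ ε for all x, y, z ∈ G. Then either f is bounded (i.e. there is M > 0 with |f(x)| ≤ M for all x ∈ G), or f([xyz]) = f(x)·f(y)·f(z) for all x, y, z ∈ G. -/
theorem stmt_14 {G : Type*} (op : G → G → G → G)
    (assoc : ∀ x y z u v : G,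
      op (op x y z) u v = op x (op y z u) v ∧
      op x (op y z u) v = op x y (op z u v))
    (ε : ℝ) (hε : 0 < ε) (f : G → ℂ) (hf : f ≠ 0)
    (h : ∀ x y z : G, ‖f (op x y z) - f x * f y * f z‖ ≤ ε) :
    (∃ M : ℝ, 0 < M ∧ ∀ x : G, ‖f x‖ ≤ M) ∨
      ∀ x y z : G, f (op x y z) = f x * f y * f z := by
  by_cases hb : ∃ M : ℝ, 0 < M ∧ ∀ x : G, ‖f x‖ ≤ M
  · exact Or.inl hb
  · right
    push_neg at hb
    intro x y z
    set d := f (op x y z) - f x * f y * f z with hd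
    have key : ∀ δ : ℝ, 0 < δ → ‖d‖ ≤ δ := by
      intro δ hδ
      set C := 2 * ε + ‖f x‖ * ‖f y‖ * ε with hC
      have hC0 : 0 < C := by positivity
      obtain ⟨a, ha⟩ := hb (max 1 (Real.sqrt (C / δ)))
        (lt_of_lt_of_le one_pos (le_max_left _ _))
      have hA1 : 1 < ‖f a‖ := lt_of_le_of_lt (le_max_left _ _) ha
      have hA2 : C / δ < (‖f a‖) ^ 2 := by
        have h1 : Real.sqrt (C / δ) < ‖f a‖ :=
          lt_of_le_of_lt (le_max_right _ _) ha
        have h2 : (Real.sqrt (C / δ)) ^ 2 = C / δ := Real.sq_sqrt (by positivity)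
        nlinarith [Real.sqrt_nonneg (C / δ)]
      have e1 := h (op x y z) a a
      have e2 := h x y (op z a a)
      have e3 := h z a a
      have heq : op (op x y z) a a = op x y (op z a a) :=
        ((assoc x y z a a).1).trans (assoc x y z a a).2
      have hsplit : d * (f a * f a)
          = -(f (op (op x y z) a a) - f (op x y z) * f a * f a)
            + (f (op x y (op z a a)) - f x * f y * f (op z a a))
            + f x * f y * (f (op z a a) - f z * f a * f a) := by
        rw [heq, hd]; ring
      have est : ‖d‖ * (‖f a‖) ^ 2 ≤ C := by
        have h4 : ‖d * (f a * f a)‖ ≤ C := by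
          rw [hsplit]
          calc ‖_‖
              ≤ ‖-(f (op (op x y z) a a) - f (op x y z) * f a * f a)
                  + (f (op x y (op z a a)) - f x * f y * f (op z a a))‖
                + ‖f x * f y * (f (op z a a) - f z * f a * f a)‖ :=
                norm_add_le _ _
            _ ≤ ‖-(f (op (op x y z) a a) - f (op x y z) * f a * f a)‖
                + ‖f (op x y (op z a a)) - f x * f y * f (op z a a)‖
                + ‖f x * f y * (f (op z a a) - f z * f a * f a)‖ := by
                have := norm_add_le
                  (-(f (op (op x y z) a a) - f (op x y z) * f a * f a))
                  (f (op x y (op z a a)) - f x * f y * f (op z a a))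
                linarith
            _ ≤ C := by
                rw [norm_neg, norm_mul, norm_mul]
                have h5 : ‖f x‖ * ‖f y‖
                    * ‖f (op z a a) - f z * f a * f a‖
                    ≤ ‖f x‖ * ‖f y‖ * ε := by
                  have hx0 : 0 ≤ ‖f x‖ * ‖f y‖ := by positivity
                  exact mul_le_mul_of_nonneg_left e3 hx0
                rw [hC]
                linarith
        calc ‖d‖ * (‖f a‖) ^ 2
            = ‖d * (f a * f a)‖ := by
              rw [norm_mul, norm_mul]; ring
          _ ≤ C := h4
      have hA0 : 0 < (‖f a‖) ^ 2 := by positivity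
      have hCd : C < δ * (‖f a‖) ^ 2 := by
        rw [div_lt_iff₀ hδ] at hA2; linarith [hA2]
      nlinarith [norm_nonneg d]
    have h0 : ‖d‖ = 0 := by
      by_contra h0
      have hpos : 0 < ‖d‖ := (norm_nonneg d).lt_of_ne (Ne.symm h0)
      have := key (‖d‖ / 2) (by linarith)
      linarith
    have := norm_eq_zero.mp h0
    exact sub_eq_zero.mp this
end
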